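/- arXiv:1801.07114 — 2 statements merged into one kernel-verified Lean document; each statement's English description precedes it below -/
import Mathlib

section
/- Let 0 ≤ x^L < x^U be reals. Then for all x ∈ [x^L, x^U], the secant sec(x) = ((tanh(x^U) - tanh(x^L))/(x^U - x^L))·x + (x^U·tanh(x^L) - x^L·tanh(x^U))/(x^U - x^L) satisfies sec(x) ≤ tanh(x). -/
/-! On `[0, ∞)` the derivative `1 / cosh² x` of `tanh` decreases, since `cosh` increases there,
so `tanh` is concave there and lies above each of its chords. -/

open Real Set

theorem ConcaveOn.secant_le_of_mem_Icc {𝕜 : Type*} [Field 𝕜] [LinearOrder 𝕜]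
    [IsStrictOrderedRing 𝕜] {s : Set 𝕜} {f : 𝕜 → 𝕜} (hf : ConcaveOn 𝕜 s f) {a b x : 𝕜}
    (ha : a ∈ s) (hb : b ∈ s) (hab : a < b) (hx : x ∈ Icc a b) :
    (f b - f a) / (b - a) * x + (b * f a - a * f b) / (b - a) ≤ f x := by
  obtain ⟨hax, hxb⟩ := hx
  have hba : 0 < b - a := sub_pos.2 hab
  have key := hf.2 ha hb (div_nonneg (sub_nonneg.2 hxb) hba.le)
    (div_nonneg (sub_nonneg.2 hax) hba.le) (by field)
  have hcomb : (b - x) / (b - a) * a + (x - a) / (b - a) * b = x := by field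
  simp only [smul_eq_mul, hcomb] at key
  calc (f b - f a) / (b - a) * x + (b * f a - a * f b) / (b - a)
      = (b - x) / (b - a) * f a + (x - a) / (b - a) * f b := by field
    _ ≤ f x := key

namespace Real

theorem hasDerivAt_tanh (x : ℝ) : HasDerivAt tanh (cosh x ^ 2)⁻¹ x := by
  have hquot := (hasDerivAt_sinh x).div (hasDerivAt_cosh x) (cosh_pos x).ne'
  rw [show tanh = sinh / cosh from funext tanh_eq_sinh_div_cosh]
  refine hquot.congr_deriv ?_
  rw [show cosh x * cosh x - sinh x * sinh x = 1 by linear_combination cosh_sq_sub_sinh_sq x,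
    one_div]

theorem deriv_tanh : deriv tanh = fun x => (cosh x ^ 2)⁻¹ :=
  funext fun x => (hasDerivAt_tanh x).deriv

theorem strictConcaveOn_tanh : StrictConcaveOn ℝ (Ici 0) tanh := by
  refine StrictAntiOn.strictConcaveOn_of_deriv (convex_Ici 0)
    (fun x _ => (hasDerivAt_tanh x).continuousAt.continuousWithinAt) ?_
  rw [interior_Ici, deriv_tanh]
  intro x hx y _ hxy
  have hcosh := cosh_strictMonoOn (mem_Ici.2 hx.out.le) (mem_Ici.2 (hx.out.trans hxy).le) hxy
  have := cosh_pos x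
  dsimp only
  gcongr

end Real

theorem tanh_secant_underestimates_on_pos (xL xU : ℝ) (h1 : 0 ≤ xL) (h2 : xL < xU) :
    ∀ x ∈ Set.Icc xL xU,
      ((Real.tanh xU - Real.tanh xL) / (xU - xL)) * x +
          (xU * Real.tanh xL - xL * Real.tanh xU) / (xU - xL) ≤ Real.tanh x :=
  fun _ hx => Real.strictConcaveOn_tanh.concaveOn.secant_le_of_mem_Icc h1 (h1.trans h2.le) h2 hx
end

section
/- Let x^L < 0. The derivative of the convex envelope F₃^{cv} of tanh on [x^L, x^U] (where x^L < 0 < x^U) is Lipschitz continuous on [x^L, x^U] with Lipschitz constant at most 2 sinh(|x^L|). -/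
open Real Set

/-! Left of the tangency point `xc` the envelope is `tanh`, right of it the tangent line at `xc`,
so its derivative is `1 - tanh² (min x xc)`. The clamp `min · xc` is 1-Lipschitz and maps
`[xL, xU]` into `[xL, 0]`, where `(tanh²)' = 2 tanh (1 - tanh²)` is bounded by
`2 |tanh| ≤ 2 |sinh| ≤ 2 sinh |xL|`. -/

theorem Real.hasDerivAt_tanh_s14 (x : ℝ) : HasDerivAt tanh (1 - tanh x ^ 2) x := by
  have h := (hasDerivAt_sinh x).div (hasDerivAt_cosh x) (cosh_pos x).ne'
  rw [show sinh / cosh = tanh from funext fun y ↦ (tanh_eq_sinh_div_cosh y).symm] at h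
  refine h.congr_deriv ?_
  rw [tanh_eq_sinh_div_cosh]
  field_simp

theorem Real.abs_tanh_le_abs_sinh (x : ℝ) : |tanh x| ≤ |sinh x| := by
  rw [tanh_eq_sinh_div_cosh, abs_div, abs_of_pos (cosh_pos x)]
  exact div_le_self (abs_nonneg _) (one_le_cosh x)

theorem Real.abs_tanh_sq_sub_tanh_sq_le {r a b : ℝ} (ha : |a| ≤ r) (hb : |b| ≤ r) :
    |tanh a ^ 2 - tanh b ^ 2| ≤ 2 * sinh r * |a - b| := by
  have hderiv (t : ℝ) : HasDerivAt (fun t ↦ tanh t ^ 2) (2 * tanh t * (1 - tanh t ^ 2)) t := by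
    simpa using (hasDerivAt_tanh_s14 t).fun_pow 2
  have hbound : ∀ t ∈ Icc (-r) r, ‖2 * tanh t * (1 - tanh t ^ 2)‖ ≤ 2 * sinh r := by
    intro t ht
    have hsech : 0 ≤ 1 - tanh t ^ 2 := by linarith [tanh_sq_lt_one t]
    calc ‖2 * tanh t * (1 - tanh t ^ 2)‖ = 2 * |tanh t| * (1 - tanh t ^ 2) := by
          rw [Real.norm_eq_abs, abs_mul, abs_mul, abs_two, abs_of_nonneg hsech]
      _ ≤ 2 * |tanh t| := mul_le_of_le_one_right (by positivity) (sub_le_self _ (sq_nonneg _))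
      _ ≤ 2 * sinh r := by
          rw [mem_Icc, ← abs_le] at ht
          grw [abs_tanh_le_abs_sinh, abs_sinh, sinh_le_sinh.2 ht]
  simpa [Real.norm_eq_abs] using (convex_Icc (-r) r).norm_image_sub_le_of_norm_hasDerivWithin_le
    (fun t _ ↦ (hderiv t).hasDerivWithinAt) hbound (abs_le.1 hb) (abs_le.1 ha)

theorem hasDerivAt_ite_le {E : Type*} [NormedAddCommGroup E] [NormedSpace ℝ E]
    {f g f' g' : ℝ → E} {c : ℝ}
    (hf : ∀ x, HasDerivAt f (f' x) x) (hg : ∀ x, HasDerivAt g (g' x) x)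
    (hfg : f c = g c) (hfg' : f' c = g' c) (x : ℝ) :
    HasDerivAt (fun x ↦ if x ≤ c then f x else g x) (if x ≤ c then f' x else g' x) x := by
  rcases lt_trichotomy x c with hlt | rfl | hgt
  · rw [if_pos hlt.le]
    refine (hf x).congr_of_eventuallyEq ?_
    filter_upwards [Iio_mem_nhds hlt] with t ht
    rw [if_pos ht.le]
  · rw [if_pos le_rfl]
    have hleft : HasDerivWithinAt (fun t ↦ if t ≤ x then f t else g t) (f' x) (Iic x) x :=
      (hf x).hasDerivWithinAt.congr (fun t ht ↦ if_pos ht) (if_pos le_rfl)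
    have hright : HasDerivWithinAt (fun t ↦ if t ≤ x then f t else g t) (f' x) (Ici x) x := by
      refine (hfg' ▸ hg x).hasDerivWithinAt.congr (fun t ht ↦ ?_) (by rw [if_pos le_rfl, hfg])
      split_ifs with htx
      · rw [le_antisymm htx ht, hfg]
      · rfl
    simpa using hleft.union hright
  · rw [if_neg hgt.not_ge]
    refine (hg x).congr_of_eventuallyEq ?_
    filter_upwards [Ioi_mem_nhds hgt] with t ht
    rw [if_neg ht.not_ge]

theorem tanh_convex_envelope_deriv_lipschitz_general (xL xU xc : ℝ)
    (hc : xc ∈ Set.Icc xL 0)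
    (htan : 1 - Real.tanh xc ^ 2 = (Real.tanh xU - Real.tanh xc) / (xU - xc))
    (F : ℝ → ℝ)
    (hF : ∀ x, F x = if x ≤ xc then Real.tanh x
      else Real.tanh xc + ((Real.tanh xU - Real.tanh xc) / (xU - xc)) * (x - xc)) :
    ∀ x ∈ Set.Icc xL xU, ∀ y ∈ Set.Icc xL xU,
      |deriv F x - deriv F y| ≤ 2 * Real.sinh |xL| * |x - y| := by
  set m := (Real.tanh xU - Real.tanh xc) / (xU - xc)
  have hline (x : ℝ) : HasDerivAt (fun t ↦ tanh xc + m * (t - xc)) m x := by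
    simpa using ((hasDerivAt_id x).sub_const xc).const_mul m |>.const_add (tanh xc)
  have hderiv (x : ℝ) : deriv F x = 1 - tanh (min x xc) ^ 2 := by
    rw [funext hF, (hasDerivAt_ite_le hasDerivAt_tanh_s14 hline (by simp) htan x).deriv]
    split_ifs with hx
    · rw [min_eq_left hx]
    · rw [min_eq_right (not_le.1 hx).le, htan]
  have hmin {x : ℝ} (hx : x ∈ Icc xL xU) : |min x xc| ≤ |xL| := by
    rw [abs_of_nonpos (hc.1.trans hc.2), abs_le]
    grind [le_min, min_le_right]
  intro x hx y hy
  calc |deriv F x - deriv F y| = |tanh (min y xc) ^ 2 - tanh (min x xc) ^ 2| := by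
        rw [hderiv, hderiv, sub_sub_sub_cancel_left]
    _ ≤ 2 * sinh |xL| * |min y xc - min x xc| := abs_tanh_sq_sub_tanh_sq_le (hmin hy) (hmin hx)
    _ ≤ 2 * sinh |xL| * |x - y| := by
        grw [abs_sub_comm, abs_min_sub_min_le_max, sub_self, abs_zero, max_eq_left (abs_nonneg _)]

theorem tanh_convex_envelope_deriv_lipschitz (xL xU xc : ℝ) (h1 : xL < 0) (h2 : 0 < xU)
    (hc : xc ∈ Set.Icc xL 0)
    (htan : 1 - Real.tanh xc ^ 2 = (Real.tanh xU - Real.tanh xc) / (xU - xc))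
    (F : ℝ → ℝ)
    (hF : ∀ x, F x = if x ≤ xc then Real.tanh x
      else Real.tanh xc + ((Real.tanh xU - Real.tanh xc) / (xU - xc)) * (x - xc)) :
    ∀ x ∈ Set.Icc xL xU, ∀ y ∈ Set.Icc xL xU,
      |deriv F x - deriv F y| ≤ 2 * Real.sinh |xL| * |x - y| :=
  tanh_convex_envelope_deriv_lipschitz_general xL xU xc hc htan F hF
end
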